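/- Let A be a DFA obtained by coloring a 1-outregular spanning subgraph R of a strongly connected uniform-outdegree digraph with color α, where R has exactly one maximal tree T with root r on a cycle H, and all vertices of maximal level L lie in T. If p is a vertex of maximal level L, then for every F-clique F, the states pα^{L-1} and pα^{L-1+|H|} cannot both lie outside any common synchronization, i.e., the pair (pα^{L-1}, pα^{L+|H|-1}) cannot be a deadlock (it is a stable pair). -/

import Mathlib

def Adj {V : Type*} (E : V → Multiset V) (p q : V) : Prop := q ∈ E p

def StronglyConnected {V : Type*} (E : V → Multiset V) : Prop :=
  ∀ p q : V, Relation.ReflTransGen (Adj E) p q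

def HasCycle {V : Type*} (E : V → Multiset V) (n : ℕ) : Prop :=
  0 < n ∧ ∃ c : ZMod n → V, ∀ i, c (i + 1) ∈ E (c i)

def CycleGcd {V : Type*} (E : V → Multiset V) (k : ℕ) : Prop :=
  (∀ n, HasCycle E n → k ∣ n) ∧ ∀ m, (∀ n, HasCycle E n → m ∣ n) → m ∣ k

def IsColoring {V : Type*} {d : ℕ} (E : V → Multiset V) (δ : V → Fin d → V) : Prop :=
  ∀ v, (List.ofFn (δ v) : Multiset V) = E v

def run {V A : Type*} (δ : V → A → V) (p : V) (s : List A) : V :=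
  s.foldl δ p

def wordImage {V A : Type*} [Fintype V] [DecidableEq V] (δ : V → A → V) (s : List A) : Finset V :=
  Finset.univ.image (fun p => run δ p s)

def IsPathLen {V : Type*} (E : V → Multiset V) (p q : V) (n : ℕ) : Prop :=
  ∃ c : Fin (n + 1) → V, c 0 = p ∧ c (Fin.last n) = q ∧
    ∀ i : Fin n, c i.succ ∈ E (c i.castSucc)

def SyncPair {V A : Type*} (δ : V → A → V) (p q : V) : Prop :=
  ∃ s : List A, run δ p s = run δ q s

def StablePair {V A : Type*} (δ : V → A → V) (p q : V) : Prop :=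
  ∀ u : List A, SyncPair δ (run δ p u) (run δ q u)

def DeadlockPair {V A : Type*} (δ : V → A → V) (p q : V) : Prop :=
  ∀ s : List A, run δ p s ≠ run δ q s

def IsFClique {V A : Type*} [Fintype V] [DecidableEq V] (δ : V → A → V) (F : Finset V) : Prop :=
  (∀ p ∈ F, ∀ q ∈ F, p ≠ q → DeadlockPair δ p q) ∧
  ∀ G : Finset V, (∀ p ∈ G, ∀ q ∈ G, p ≠ q → DeadlockPair δ p q) → G.card ≤ F.card

noncomputable def levelOf {V : Type*} (f : V → V) (v : V) : ℕ :=
  sInf {n | ∃ m, 0 < m ∧ f^[m] (f^[n] v) = f^[n] v}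

noncomputable def rootOf {V : Type*} (f : V → V) (v : V) : V := f^[levelOf f v] v

noncomputable def maxLevel {V : Type*} [Fintype V] (f : V → V) : ℕ :=
  Finset.univ.sup (levelOf f)

def UniqueMaxTree {V : Type*} [Fintype V] (f : V → V) : Prop :=
  0 < maxLevel f ∧ ∃ r : V, ∀ v : V, levelOf f v = maxLevel f → rootOf f v = r

def HasCycleIn {V : Type*} (E : V → Multiset V) (S : Finset V) (n : ℕ) : Prop :=
  0 < n ∧ ∃ c : ZMod n → V, (∀ i, c i ∈ S) ∧ ∀ i, c (i + 1) ∈ E (c i)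

def CycleGcdIn {V : Type*} (E : V → Multiset V) (S : Finset V) (k : ℕ) : Prop :=
  (∀ n, HasCycleIn E S n → k ∣ n) ∧ ∀ m, (∀ n, HasCycleIn E S n → m ∣ n) → m ∣ k

/-!
Let `L` be the maximal level and `q = pα^{L-1}`. Shift an F-clique by a word so that it contains
`p`, then by `α^{L-1}`: the result is an F-clique `A` containing `q`. Any other vertex of maximal
level has the same root as `p` and is merged with it by `α^L`, so every element of `A` other
than `q` lies on an `α`-cycle. A power `α^k` with `|H| ∣ k` that is a common period of all cycle
vertices therefore fixes `A \ {q}` and sends `q` to `pα^{L-1+|H|}`. If some word `u` turned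
`(q, qα^k)` into a deadlock, then `(insert (qα^k) A)u` would be a clique; by maximality
`qα^k ∈ A \ {q}`, so `qα^k` is fixed by `α^k`, and `(q, qα^k)α^k = (qα^k, qα^k)` could not be
a deadlock pair of `A`.
-/

open Function

section Periodic

variable {V : Type*} {f : V → V}

theorem exists_iterate_mem_periodicPts [Finite V] (f : V → V) (x : V) :
    ∃ n, f^[n] x ∈ periodicPts f := by
  obtain ⟨a, b, hne, heq⟩ := Finite.exists_ne_map_eq_of_infinite (f^[·] x)
  wlog hab : a < b generalizing a b
  · exact this b a hne.symm heq.symm (by omega)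
  refine ⟨a, mk_mem_periodicPts (n := b - a) (by omega) ?_⟩
  change f^[b - a] (f^[a] x) = f^[a] x
  rw [← iterate_add_apply, Nat.sub_add_cancel hab.le]
  exact heq.symm

theorem iterate_levelOf_mem_periodicPts [Finite V] (f : V → V) (v : V) :
    f^[levelOf f v] v ∈ periodicPts f :=
  Nat.sInf_mem (exists_iterate_mem_periodicPts f v)

theorem iterate_mem_periodicPts_of_levelOf_le [Finite V] {v : V} {n : ℕ}
    (h : levelOf f v ≤ n) : f^[n] v ∈ periodicPts f := by
  obtain ⟨m, hm, hper⟩ := mem_periodicPts.1 (iterate_levelOf_mem_periodicPts f v)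
  rw [← Nat.sub_add_cancel h, iterate_add_apply]
  exact mk_mem_periodicPts hm (hper.apply_iterate _)

theorem UniqueMaxTree.iterate_maxLevel_eq [Fintype V] (h : UniqueMaxTree f) {u v : V}
    (hu : levelOf f u = maxLevel f) (hv : levelOf f v = maxLevel f) :
    f^[maxLevel f] u = f^[maxLevel f] v := by
  obtain ⟨r, hr⟩ := h.2
  have := (hr u hu).trans (hr v hv).symm
  rwa [rootOf, rootOf, hu, hv] at this

theorem UniqueMaxTree.iterate_pred_maxLevel_mem_periodicPts [Fintype V] (h : UniqueMaxTree f)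
    {p v : V} (hp : levelOf f p = maxLevel f) (hv : f^[maxLevel f] v ≠ f^[maxLevel f] p) :
    f^[maxLevel f - 1] v ∈ periodicPts f := by
  apply iterate_mem_periodicPts_of_levelOf_le
  have hle : levelOf f v ≤ maxLevel f := Finset.le_sup (Finset.mem_univ v)
  have hne : levelOf f v ≠ maxLevel f := fun hv' => hv (h.iterate_maxLevel_eq hv' hp)
  omega

theorem iterate_mul_eq_of_isPeriodicPt_apply {m n : ℕ} {x : V} (h : IsPeriodicPt f m (f x))
    (hn : n ≠ 0) : f^[m * n] x = f^[m] x := by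
  obtain ⟨n, rfl⟩ := Nat.exists_eq_succ_of_ne_zero hn
  rcases m with _ | m
  · simp
  have hper : IsPeriodicPt f (m + 1) (f^[m + 1] x) := by
    rw [iterate_succ_apply]
    exact h.apply_iterate m
  rw [Nat.mul_succ, iterate_add_apply]
  exact (hper.mul_const n).eq

end Periodic

section Automaton

variable {V A : Type*} {δ : V → A → V}

theorem run_append (δ : V → A → V) (p : V) (u w : List A) :
    run δ p (u ++ w) = run δ (run δ p u) w :=
  List.foldl_append

theorem run_replicate (δ : V → A → V) (a : A) (n : ℕ) (p : V) :
    run δ p (List.replicate n a) = (δ · a)^[n] p := by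
  induction n generalizing p with
  | zero => rfl
  | succ n ih => exact ih (δ p a)

theorem DeadlockPair.ne {p q : V} (h : DeadlockPair δ p q) : p ≠ q :=
  h []

theorem DeadlockPair.symm {p q : V} (h : DeadlockPair δ p q) : DeadlockPair δ q p :=
  fun s hs => h s hs.symm

theorem DeadlockPair.run {p q : V} (h : DeadlockPair δ p q) (u : List A) :
    DeadlockPair δ (run δ p u) (run δ q u) :=
  fun s hs => h (u ++ s) (by rwa [run_append, run_append])

theorem injOn_run_of_pairwise {B : Set V} {u : List A}
    (hB : B.Pairwise (DeadlockPair δ on (run δ · u))) : Set.InjOn (run δ · u) B :=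
  fun _ ha _ hb hab => by_contra fun hne => hB ha hb hne [] hab

theorem exists_run_eq_of_reflTransGen {d : ℕ} {E : V → Multiset V} {δ : V → Fin d → V}
    (hδ : IsColoring E δ) {p q : V} (h : Relation.ReflTransGen (Adj E) p q) :
    ∃ w, run δ p w = q := by
  induction h with
  | refl => exact ⟨[], rfl⟩
  | @tail b c _ hbc ih =>
    obtain ⟨w, rfl⟩ := ih
    have hc : c ∈ (List.ofFn (δ (run δ p w)) : Multiset V) := by rw [hδ]; exact hbc
    obtain ⟨i, rfl⟩ := List.mem_ofFn.1 (Multiset.mem_coe.1 hc)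
    exact ⟨w ++ [i], run_append δ p w [i]⟩

end Automaton

section FClique

variable {V A : Type*} [Fintype V] [DecidableEq V] {δ : V → A → V} {F : Finset V}

theorem IsFClique.card_le_of_pairwise (hF : IsFClique δ F) {B : Finset V} {u : List A}
    (hB : (B : Set V).Pairwise (DeadlockPair δ on (run δ · u))) : B.card ≤ F.card := by
  rw [← Finset.card_image_of_injOn (injOn_run_of_pairwise hB)]
  refine hF.2 _ fun a ha b hb hab => ?_
  rw [← Finset.mem_coe, Finset.coe_image] at ha hb
  exact ((injOn_run_of_pairwise hB).pairwise_image.2 hB) ha hb hab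

theorem IsFClique.image_run (hF : IsFClique δ F) (w : List A) :
    IsFClique δ (F.image (run δ · w)) := by
  have hw : (F : Set V).Pairwise (DeadlockPair δ on (run δ · w)) :=
    fun a ha b hb hab => (hF.1 a ha b hb hab).run w
  refine ⟨fun a ha b hb hab => ?_, fun G hG => ?_⟩
  · rw [← Finset.mem_coe, Finset.coe_image] at ha hb
    exact ((injOn_run_of_pairwise hw).pairwise_image.2 hw) ha hb hab
  · rw [Finset.card_image_of_injOn (injOn_run_of_pairwise hw)]
    exact hF.2 G hG

variable (δ) in
theorem exists_isFClique : ∃ F : Finset V, IsFClique δ F := by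
  classical
  obtain ⟨F, hF, hmax⟩ := Finset.exists_max_image
    (Finset.univ.filter fun B : Finset V => (B : Set V).Pairwise (DeadlockPair δ)) Finset.card
    ⟨∅, by simp⟩
  refine ⟨F, fun p hp q hq => (Finset.mem_filter.1 hF).2 hp hq, fun G hG => ?_⟩
  exact hmax G (Finset.mem_filter.2 ⟨Finset.mem_univ G, fun p hp q hq => hG p hp q hq⟩)

theorem exists_isFClique_mem {d : ℕ} {E : V → Multiset V} {δ : V → Fin d → V}
    (hsc : StronglyConnected E) (hδ : IsColoring E δ) (p : V) :
    ∃ F : Finset V, IsFClique δ F ∧ p ∈ F := by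
  obtain ⟨F, hF⟩ := exists_isFClique δ
  have hsingle : ({p} : Finset V).card ≤ F.card :=
    hF.2 {p} fun a ha b hb hab => absurd ((Finset.mem_singleton.1 ha).trans
      (Finset.mem_singleton.1 hb).symm) hab
  obtain ⟨g, hg⟩ := Finset.card_pos.1 (by simpa using hsingle)
  obtain ⟨w, rfl⟩ := exists_run_eq_of_reflTransGen hδ (hsc g p)
  exact ⟨_, hF.image_run w, Finset.mem_image_of_mem _ hg⟩

theorem IsFClique.stablePair_run (hF : IsFClique δ F) {q : V} (hq : q ∈ F) {s : List A}
    (hfix : ∀ c ∈ F, c ≠ q → run δ c s = c) : StablePair δ q (run δ q s) := by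
  intro u
  by_contra hsync
  set q' := run δ q s
  have hdead : DeadlockPair δ (run δ q u) (run δ q' u) := fun t ht => hsync ⟨t, ht⟩
  have hq' : ∀ c ∈ F, c ≠ q → DeadlockPair δ c q' := fun c hc hne => by
    simpa only [hfix c hc hne] using (hF.1 c hc q hq hne).run s
  have hcard := hF.card_le_of_pairwise (B := insert q' F) (u := u) (by
    rw [Finset.coe_insert, Set.pairwise_insert]
    refine ⟨fun a ha b hb hab => (hF.1 a ha b hb hab).run u, fun c hc hne => ?_⟩
    by_cases hcq : c = q
    · subst hcq
      exact ⟨hdead.symm, hdead⟩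
    · exact ⟨(hq' c hc hcq).symm.run u, (hq' c hc hcq).run u⟩)
  have hmem : q' ∈ F := by
    by_contra h
    rw [Finset.card_insert_of_notMem h] at hcard
    omega
  have hne : q' ≠ q := fun h => hdead.ne (by rw [h])
  exact (hq' q' hmem hne).ne rfl

end FClique

/-- if the spanning subgraph of color α has exactly one maximal tree
with maximal level L and the root lies on an α-cycle of length |H|, then for a
vertex p of maximal level the pair (pα^{L-1}, pα^{L-1+|H|}) is stable. -/
theorem stmt17 {V : Type*} [Fintype V] [DecidableEq V] {d : ℕ}
    (E : V → Multiset V)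
    (hsc : StronglyConnected E)
    (δ : V → Fin d → V) (hδ : IsColoring E δ)
    (α : Fin d) (f : V → V) (hf : ∀ v, δ v α = f v)
    (humt : UniqueMaxTree f)
    (p : V) (hp : levelOf f p = maxLevel f)
    (r : V) (hr : rootOf f p = r)
    (H : ℕ) (hH : H = sInf {mm | 0 < mm ∧ f^[mm] r = r}) :
    StablePair δ (run δ p (List.replicate (maxLevel f - 1) α))
      (run δ p (List.replicate (maxLevel f - 1 + H) α)) := by
  have hfα : (δ · α) = f := funext hf
  obtain ⟨F, hF, hpF⟩ := exists_isFClique_mem hsc hδ p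
  have hA := hF.image_run (List.replicate (maxLevel f - 1) α)
  have hcycle : ∀ c ∈ F.image (run δ · (List.replicate (maxLevel f - 1) α)),
      c ≠ run δ p (List.replicate (maxLevel f - 1) α) → c ∈ periodicPts f := by
    simp only [Finset.forall_mem_image, run_replicate, hfα]
    intro v hv hne
    refine humt.iterate_pred_maxLevel_mem_periodicPts hp fun heq => ?_
    refine hF.1 v hv p hpF (by rintro rfl; exact hne rfl) (List.replicate (maxLevel f) α) ?_
    simpa only [run_replicate, hfα] using heq
  have hroot : f (f^[maxLevel f - 1] p) = r := by
    rw [← iterate_succ_apply' f, Nat.succ_eq_add_one, Nat.sub_add_cancel humt.1, ← hp, ← rootOf,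
      hr]
  have hHr : IsPeriodicPt f H r := by
    have hr_cycle : r ∈ periodicPts f := hr ▸ iterate_levelOf_mem_periodicPts f p
    rw [hH]
    exact (Nat.sInf_mem hr_cycle).2
  have key := hA.stablePair_run (Finset.mem_image_of_mem _ hpF)
    (s := List.replicate (H * (Fintype.card V).factorial) α) fun c hc hne => by
      rw [run_replicate, hfα]
      exact ((isPeriodicPt_factorial_card_of_mem_periodicPts (hcycle c hc hne)).const_mul H).eq
  convert key using 1
  simp only [run_replicate, hfα]
  rw [iterate_mul_eq_of_isPeriodicPt_apply (hroot ▸ hHr) (Nat.factorial_ne_zero _),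
    ← iterate_add_apply, add_comm]
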